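/- In the execution of Algorithm lineon on any request sequence R, the total number of commitments made by level-0 intervals is at most the number of base replicas: |{⟨I,t⟩ ∈ COMMIT : l(I) = 0}| ≤ |Base|. -/

import Mathlib

open Finset

/-! ## The time-line grid of a line network -/

/-- Grid edges of the time-line graph of the line network:
`h v t` is the undirected horizontal edge `{(v,t),(v+1,t)}`,
`a v t` is the arc `((v,t),(v,t+1))` directed forward in time. -/
inductive GEdge : Type
  | h (v t : ℕ) : GEdge
  | a (v t : ℕ) : GEdge
deriving DecidableEq

/-- Distance between two nodes of the line network. -/
def natdist (a b : ℕ) : ℕ := max a b - min a b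

/-- The (replica) endpoints of a grid edge. -/
def eVerts : GEdge → Finset (ℕ × ℕ)
  | .h v t => {(v, t), (v + 1, t)}
  | .a v t => {(v, t), (v, t + 1)}

/-- The replicas that are endpoints of edges of `F`. -/
def verts (F : Finset GEdge) : Finset (ℕ × ℕ) := F.biUnion eVerts

/-- The edge lies inside the grid of the line network `L(n)` (nodes `1,…,n`). -/
def eInGrid (n : ℕ) : GEdge → Prop
  | .h v _ => 1 ≤ v ∧ v + 1 ≤ n
  | .a v _ => 1 ≤ v ∧ v ≤ n

/-- The distance `d((u,s),(v,t)) = (t-s) + |v-u|` if `s ≤ t`, and `∞` otherwise. -/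
def gdist (p q : ℕ × ℕ) : WithTop ℕ :=
  if p.2 ≤ q.2 then ((q.2 - p.2 + natdist p.1 q.1 : ℕ) : WithTop ℕ) else ⊤

/-- One step of a path in a solution: horizontal edges may be traversed in both
directions, arcs only forward in time. -/
inductive GStep (F : Finset GEdge) : ℕ × ℕ → ℕ × ℕ → Prop
  | right {v t : ℕ} : GEdge.h v t ∈ F → GStep F (v, t) (v + 1, t)
  | left {v t : ℕ} : GEdge.h v t ∈ F → GStep F (v + 1, t) (v, t)
  | up {v t : ℕ} : GEdge.a v t ∈ F → GStep F (v, t) (v, t + 1)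

/-- `q` is reachable from `p` in the edge set `F`. -/
def Reaches (F : Finset GEdge) (p q : ℕ × ℕ) : Prop := Relation.ReflTransGen (GStep F) p q

/-- A feasible MCD solution: a set of grid edges spanning all requests from the
origin replica `(r0, 0)`. -/
def Feasible (n r0 : ℕ) (R : List (ℕ × ℕ)) (F : Finset GEdge) : Prop :=
  (∀ e ∈ F, eInGrid n e) ∧ ∀ r ∈ R, Reaches F (r0, 0) r

/-- `|OPT|`, the cost of a minimum-cost feasible solution. -/
noncomputable def optCost (n r0 : ℕ) (R : List (ℕ × ℕ)) : ℕ :=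
  sInf {c : ℕ | ∃ F : Finset GEdge, Feasible n r0 R F ∧ F.card = c}

/-- A valid MCD instance on `L(n)`: the origin and all requested nodes are in
`{1,…,n}` and the request times are nondecreasing. -/
def ValidInstance (n r0 : ℕ) (R : List (ℕ × ℕ)) : Prop :=
  1 ≤ r0 ∧ r0 ≤ n ∧ (∀ r ∈ R, 1 ≤ r.1 ∧ r.1 ≤ n) ∧ List.Chain' (· ≤ ·) (R.map Prod.snd)

/-- The time `t_N` of the last request. -/
def lastT (R : List (ℕ × ℕ)) : ℕ := (R.map Prod.snd).foldr max 0

/-! ## The offline algorithm Triangle of Charikar, Halperin and Motwani -/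

/-- The `i`-th request (junk value `(0,0)` out of range). -/
def req (R : List (ℕ × ℕ)) (i : ℕ) : ℕ × ℕ := R.getD i (0, 0)

/-- The radius `ρ^T_i = d(q_i, r_i)` of the `i`-th request, where `q_i = serve i`
is its serving replica. -/
def triRho (R : List (ℕ × ℕ)) (serve : ℕ → ℕ × ℕ) (i : ℕ) : ℕ :=
  ((req R i).2 - (serve i).2) + natdist (serve i).1 (req R i).1

/-- `Base(i)`: the replicas `(v, t_i)` with `|v - v_i| ≤ ρ^T_i`. -/
def triBase (n : ℕ) (R : List (ℕ × ℕ)) (serve : ℕ → ℕ × ℕ) (i : ℕ) : Finset (ℕ × ℕ) :=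
  ((Finset.Icc 1 n).filter fun v => natdist v (req R i).1 ≤ triRho R serve i).image
    fun v => (v, (req R i).2)

/-- `Base_H(i)`: the horizontal edges joining consecutive replicas of `Base(i)`. -/
def triBaseH (n : ℕ) (R : List (ℕ × ℕ)) (serve : ℕ → ℕ × ℕ) (i : ℕ) : Finset GEdge :=
  ((Finset.Icc 1 n).filter fun v =>
      v + 1 ≤ n ∧ natdist v (req R i).1 ≤ triRho R serve i ∧
        natdist (v + 1) (req R i).1 ≤ triRho R serve i).image
    fun v => GEdge.h v (req R i).2

/-- The arcs of the vertical path from the serving replica `(u_i, s_i)` to `(u_i, t_i)`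
added at step (T3). -/
def triAddA (R : List (ℕ × ℕ)) (serve : ℕ → ℕ × ℕ) (i : ℕ) : Finset GEdge :=
  (Finset.Ico (serve i).2 (req R i).2).image fun τ => GEdge.a (serve i).1 τ

/-- Triangle's solution after handling the first `i` requests. -/
def triSol (R : List (ℕ × ℕ)) (serve : ℕ → ℕ × ℕ) (addH : ℕ → Finset GEdge)
    (i : ℕ) : Finset GEdge :=
  (Finset.range i).biUnion fun j => triAddA R serve j ∪ addH j

/-- The replicas of Triangle's solution after handling the first `i` requests
(initially only the origin replica `(r0,0)`). -/
def triReps (r0 : ℕ) (R : List (ℕ × ℕ)) (serve : ℕ → ℕ × ℕ) (addH : ℕ → Finset GEdge)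
    (i : ℕ) : Finset (ℕ × ℕ) :=
  insert (r0, 0) (verts (triSol R serve addH i))

/-- An execution of Algorithm Triangle on the instance `(n, r0, R)`:
`serve i` is the serving replica `q_i = (u_i, s_i)` of request `r_i` (step (T1)),
chosen in the current solution at minimum distance from `r_i`;
`addH i` is the set of horizontal edges added at step (T4), namely all of
`Base_H(i)` except possibly one edge (the one closing a cycle). -/
structure TriangleExec (n r0 : ℕ) (R : List (ℕ × ℕ)) where
  serve : ℕ → ℕ × ℕ
  addH : ℕ → Finset GEdge
  serve_mem : ∀ i < R.length, serve i ∈ triReps r0 R serve addH i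
  serve_time : ∀ i < R.length, (serve i).2 ≤ (req R i).2
  serve_min : ∀ i < R.length, ∀ q ∈ triReps r0 R serve addH i,
      gdist (serve i) (req R i) ≤ gdist q (req R i)
  addH_spec : ∀ i < R.length, ∃ E : Finset GEdge,
      E.card ≤ 1 ∧ addH i = triBaseH n R serve i \ E
  base_conn : ∀ i < R.length, ∀ p ∈ triBase n R serve i,
      Reaches (triSol R serve addH (i + 1)) (r0, 0) p
  addH_tail : ∀ i, R.length ≤ i → addH i = ∅

/-- `H^T`: the horizontal edges of Triangle's final solution. -/
def triHT (R : List (ℕ × ℕ)) (addH : ℕ → Finset GEdge) : Finset GEdge :=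
  (Finset.range R.length).biUnion addH

/-- `A^T`: the arcs of Triangle's final solution. -/
def triAT (R : List (ℕ × ℕ)) (serve : ℕ → ℕ × ℕ) : Finset GEdge :=
  (Finset.range R.length).biUnion (triAddA R serve)

/-- `Base = ∪ᵢ Base(i)`: all base replicas. -/
def triBaseAll (n : ℕ) (R : List (ℕ × ℕ)) (serve : ℕ → ℕ × ℕ) : Finset (ℕ × ℕ) :=
  (Finset.range R.length).biUnion (triBase n R serve)

/-! ## Algorithm lineon -/

/-- An interval of the hierarchical partition, encoded as `(level, index)`:
`(l, j)` denotes `I^l_j = {Δ(j-1)·2^l + 1, …, Δ·j·2^l}`. -/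
abbrev Ivl := ℕ × ℕ

/-- The nodes of the interval `I = (l, j)`. -/
def ivlNodes (Δ : ℕ) (I : Ivl) : Finset ℕ :=
  Finset.Icc (Δ * (I.2 - 1) * 2 ^ I.1 + 1) (Δ * I.2 * 2 ^ I.1)

/-- `I = (l, j)` is a genuine interval of the partition of `{1,…,n}`,
where `n = Δ · 2^k`: its level is at most `log₂ m = k` and
`1 ≤ j ≤ m / 2^l = 2^(k-l)`. -/
def validIvl (Δ k : ℕ) (I : Ivl) : Prop :=
  I.1 ≤ k ∧ 1 ≤ I.2 ∧ I.2 ≤ 2 ^ (k - I.1)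

/-- The nodes of the neighborhood `N(I) = NL(I) ∪ I ∪ NR(I)` of interval `I`. -/
def nbhdNodes (n Δ : ℕ) (I : Ivl) : Finset ℕ :=
  Finset.Icc (Δ * (I.2 - 2) * 2 ^ I.1 + 1) (min n (Δ * (I.2 + 1) * 2 ^ I.1))

/-- The nodes having a base replica at time `t` (`Base[t]`, as nodes). -/
def baseNodesAt (n : ℕ) (R : List (ℕ × ℕ)) (serve : ℕ → ℕ × ℕ) (t : ℕ) : Finset ℕ :=
  ((triBaseAll n R serve).filter fun p => p.2 = t).image Prod.fst

/-- `I` is active at time `t`: `Base ∩ I[t - 2^{l(I)}, t] ≠ ∅`. -/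
def activeAt (n Δ : ℕ) (R : List (ℕ × ℕ)) (serve : ℕ → ℕ × ℕ) (I : Ivl) (t : ℕ) : Prop :=
  ∃ p ∈ triBaseAll n R serve, p.1 ∈ ivlNodes Δ I ∧ p.2 ≤ t ∧ t ≤ p.2 + 2 ^ I.1

/-- `I` is stay-active at time `t`: `Base ∩ I[t - 2^{l(I)} + 1, t] ≠ ∅`. -/
def stayActiveAt (n Δ : ℕ) (R : List (ℕ × ℕ)) (serve : ℕ → ℕ × ℕ) (I : Ivl) (t : ℕ) : Prop :=
  ∃ p ∈ triBaseAll n R serve, p.1 ∈ ivlNodes Δ I ∧ p.2 ≤ t ∧ t < p.2 + 2 ^ I.1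

/-- `C_t`: the nodes storing a copy at time `t`.  `C_0 = {r0}`, and `C_{t+1}`
consists of the origin together with the nodes selected (by `sel`) for the
commitments made at time `t` (listed, in processing order, in `commitList t`). -/
def lineC (r0 : ℕ) (commitList : ℕ → List Ivl) (sel : ℕ → Ivl → ℕ) : ℕ → Finset ℕ
  | 0 => {r0}
  | t + 1 => insert r0 ((commitList t).map (sel t)).toFinset

/-- The nodes to which the delivery phase for request `r_j` delivers a copy:
the horizontal path from `q^on_j` to `r_j` together with the nodes of `Base(j)`. -/
def servedNodes (n : ℕ) (R : List (ℕ × ℕ)) (serve : ℕ → ℕ × ℕ) (qon : ℕ → ℕ)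
    (j : ℕ) : Finset ℕ :=
  Finset.Icc (min (qon j) (req R j).1) (max (qon j) (req R j).1) ∪
    (triBase n R serve j).image Prod.fst

/-- The nodes whose time-`t_i` replica is in lineon's solution when request `r_i`
arrives: the caches `C_{t_i}` together with everything delivered for earlier
requests of the same time. -/
def availNodes (n r0 : ℕ) (R : List (ℕ × ℕ)) (serve : ℕ → ℕ × ℕ)
    (commitList : ℕ → List Ivl) (sel : ℕ → Ivl → ℕ) (qon : ℕ → ℕ) (i : ℕ) : Finset ℕ :=
  lineC r0 commitList sel (req R i).2 ∪
    (Finset.range i).biUnion fun j =>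
      if (req R j).2 = (req R i).2 then servedNodes n R serve qon j else ∅

/-- An execution of Algorithm lineon with parameter `Δ` (where `n = Δ · 2^k`) on the
instance `(n, r0, R)`.  It simulates Triangle (`tri`); `commitList t` is the list of
intervals committing at time `t`, in the order processed by the storage phase
(levels in increasing order); `sel t I` is the node selected for the commitment
`⟨I,t⟩` in step (S1.2); `qon i` is the node of the serving replica `q^on_i` of
request `r_i` chosen in the delivery phase (step (D1)). -/
structure LineonExec (n Δ k r0 : ℕ) (R : List (ℕ × ℕ)) where
  tri : TriangleExec n r0 R
  hn : n = Δ * 2 ^ k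
  commitList : ℕ → List Ivl
  sel : ℕ → Ivl → ℕ
  qon : ℕ → ℕ
  commit_valid : ∀ t, ∀ I ∈ commitList t, validIvl Δ k I
  commit_nodup : ∀ t, (commitList t).Nodup
  commit_sorted : ∀ t, ((commitList t).map Prod.fst).Pairwise (· ≤ ·)
  commit_stay : ∀ t, ∀ I ∈ commitList t, stayActiveAt n Δ R tri.serve I t
  commit_fresh : ∀ t l₁ I l₂, commitList t = l₁ ++ I :: l₂ →
      ∀ v ∈ nbhdNodes n Δ I, v ≠ r0 ∧ v ∉ l₁.map (sel t)
  commit_tail : ∀ t, lastT R < t → commitList t = []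
  sel_nbhd : ∀ t, ∀ I ∈ commitList t, sel t I ∈ nbhdNodes n Δ I
  sel_src : ∀ t, ∀ I ∈ commitList t,
      sel t I ∈ baseNodesAt n R tri.serve t ∨ sel t I ∈ lineC r0 commitList sel t
  loop_done : ∀ t ≤ lastT R, ∀ I, validIvl Δ k I → stayActiveAt n Δ R tri.serve I t →
      ∃ v ∈ nbhdNodes n Δ I, v ∈ lineC r0 commitList sel (t + 1)
  qon_mem : ∀ i < R.length, qon i ∈ availNodes n r0 R tri.serve commitList sel qon i
  qon_min : ∀ i < R.length, ∀ w ∈ availNodes n r0 R tri.serve commitList sel qon i,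
      natdist (qon i) (req R i).1 ≤ natdist w (req R i).1

/-- The online radius `ρ^on_i = d(q^on_i, r_i)`. -/
def lineRon (R : List (ℕ × ℕ)) (qon : ℕ → ℕ) (i : ℕ) : ℕ := natdist (qon i) (req R i).1

/-- `H^on`: the horizontal edges of lineon's final solution. -/
def lineHon (n : ℕ) (R : List (ℕ × ℕ)) (serve : ℕ → ℕ × ℕ) (qon : ℕ → ℕ) : Finset GEdge :=
  (Finset.range R.length).biUnion fun i =>
    (Finset.Ico (min (qon i) (req R i).1) (max (qon i) (req R i).1)).image
        (fun v => GEdge.h v (req R i).2) ∪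
      triBaseH n R serve i

/-- `A^on`: the arcs of lineon's final solution, i.e. the arcs `((v,t),(v,t+1))`
with `(v,t+1) ∈ C_{t+1}`. -/
def lineAon (r0 : ℕ) (R : List (ℕ × ℕ)) (commitList : ℕ → List Ivl)
    (sel : ℕ → Ivl → ℕ) : Finset GEdge :=
  (Finset.range (lastT R)).biUnion fun t =>
    (lineC r0 commitList sel (t + 1)).image fun v => GEdge.a v t

/-- `COMMIT`, as a finite set of pairs `⟨I, t⟩`. -/
def commitSet (R : List (ℕ × ℕ)) (commitList : ℕ → List Ivl) : Finset (Ivl × ℕ) :=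
  (Finset.range (lastT R + 1)).biUnion fun t =>
    (commitList t).toFinset.image fun I => (I, t)

/-- The total number of commitments made by level-0 intervals is
at most the number of base replicas: `|{⟨I,t⟩ ∈ COMMIT : l(I) = 0}| ≤ |Base|`. -/
theorem lineon_level0_commitments_le_base (n Δ k r0 : ℕ) (R : List (ℕ × ℕ))
    (hV : ValidInstance n r0 R) (hΔ : 1 ≤ Δ) (e : LineonExec n Δ k r0 R) :
    ((commitSet R e.commitList).filter fun p => p.1.1 = 0).card ≤
      (triBaseAll n R e.tri.serve).card := by
  classical
  set S := (commitSet R e.commitList).filter fun p => p.1.1 = 0 with hS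
  have key : ∀ q ∈ S, ∃ p ∈ triBaseAll n R e.tri.serve,
      p.1 ∈ ivlNodes Δ q.1 ∧ p.2 = q.2 := by
    intro q hq
    simp only [hS, commitSet, Finset.mem_filter, Finset.mem_biUnion, Finset.mem_range,
      Finset.mem_image, List.mem_toFinset] at hq
    obtain ⟨⟨t, ht, I, hI, rfl⟩, hl0⟩ := hq
    obtain ⟨p, hp, hpi, hpt, hpt'⟩ := e.commit_stay t I hI
    refine ⟨p, hp, hpi, ?_⟩
    simp only at hl0
    rw [hl0, pow_zero] at hpt'
    omega
  have key' : ∀ q : Ivl × ℕ, ∃ p : ℕ × ℕ, q ∈ S →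
      p ∈ triBaseAll n R e.tri.serve ∧ p.1 ∈ ivlNodes Δ q.1 ∧ p.2 = q.2 := by
    intro q
    by_cases h : q ∈ S
    · obtain ⟨p, hp, h1, h2⟩ := key q h
      exact ⟨p, fun _ => ⟨hp, h1, h2⟩⟩
    · exact ⟨(0, 0), fun h' => absurd h' h⟩
  choose f hf using key'
  apply Finset.card_le_card_of_injOn f (fun q hq => (hf q hq).1)
  intro q hq q' hq' hfeq
  obtain ⟨-, h1, h2⟩ := hf q hq
  obtain ⟨-, h1', h2'⟩ := hf q' hq'
  rw [hfeq] at h1 h2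
  have hl0 : q.1.1 = 0 := (Finset.mem_filter.mp hq).2
  have hl0' : q'.1.1 = 0 := (Finset.mem_filter.mp hq').2
  -- f q' lies in both level-0 intervals, which must coincide
  set x := (f q').1 with hx
  simp only [ivlNodes, Finset.mem_Icc, hl0, hl0', pow_zero, mul_one] at h1 h1'
  have hj : q.1.2 = q'.1.2 := by
    by_contra hne
    rcases Nat.lt_or_ge q.1.2 q'.1.2 with h | h
    · have hle : Δ * q.1.2 ≤ Δ * (q'.1.2 - 1) := Nat.mul_le_mul_left Δ (by omega)
      linarith [h1.1, h1.2, h1'.1, h1'.2]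
    · have hba : q'.1.2 < q.1.2 := by omega
      have hle : Δ * q'.1.2 ≤ Δ * (q.1.2 - 1) := Nat.mul_le_mul_left Δ (by omega)
      linarith [h1.1, h1.2, h1'.1, h1'.2]
  have ht : q.2 = q'.2 := by rw [← h2, h2']
  exact Prod.ext (Prod.ext (hl0.trans hl0'.symm) hj) ht
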